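/- arXiv:2507.23241 — 2 statements merged into one kernel-verified Lean document; each statement's English description precedes it below -/
import Mathlib

section
/- Let A be a square matrix, A* a square matrix of the same size with ρ(A*)<1, and suppose A = A* + A e₁ e₁ᵀ where e₁ is the first standard basis vector. Let E = (I−A*)^{-1} A and suppose e₁ᵀ E e₁ = 1. Then e₁ᵀ(I−A*)^{-1} is a left 1-eigenvector of A, i.e. e₁ᵀ(I−A*)^{-1} A = e₁ᵀ(I−A*)^{-1}. -/
/-!
Put `v = e₁ᵀ (I − A*)⁻¹`, so that `v (I − A*) = e₁ᵀ`, i.e. `v A* = v − e₁ᵀ`. Since `A` differs from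
`A*` by the rank-one matrix `(A e₁) e₁ᵀ`, we get `v A = v − e₁ᵀ + (v A e₁) e₁ᵀ`, and
`v A e₁ = e₁ᵀ E e₁ = 1`. Invertibility of `I − A*` holds because `ρ(A*) < 1` keeps `1` out of
the spectrum of `A*`.
-/

open Matrix

/-- Spectral radius of a real square matrix: the supremum of the moduli of the
complex eigenvalues of its complexification. -/
noncomputable def specRad {n : ℕ} (A : Matrix (Fin n) (Fin n) ℝ) : ℝ :=
  sSup {r : ℝ | ∃ z : ℂ, z ∈ spectrum ℂ (A.map (Complex.ofReal ·)) ∧ r = ‖z‖}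

theorem ofReal_mem_spectrum_map_ofReal {n : Type*} [Fintype n] [DecidableEq n]
    {A : Matrix n n ℝ} {r : ℝ} (hr : r ∈ spectrum ℝ A) :
    (r : ℂ) ∈ spectrum ℂ (A.map (Complex.ofReal ·)) := by
  rw [spectrum.mem_iff, isUnit_iff_isUnit_det, isUnit_iff_ne_zero, not_not] at hr ⊢
  have hmap : algebraMap ℂ (Matrix n n ℂ) r - A.map (Complex.ofReal ·)
      = (algebraMap ℝ ℂ).mapMatrix (algebraMap ℝ (Matrix n n ℝ) r - A) := by
    ext i j
    simp [algebraMap_eq_diagonal, diagonal_apply, apply_ite Complex.ofReal]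
  rw [hmap, ← RingHom.map_det, hr, map_zero]

theorem norm_le_specRad {n : ℕ} {A : Matrix (Fin n) (Fin n) ℝ} {z : ℂ}
    (hz : z ∈ spectrum ℂ (A.map (Complex.ofReal ·))) : ‖z‖ ≤ specRad A := by
  refine le_csSup ?_ ⟨z, hz, rfl⟩
  refine ((A.map (Complex.ofReal ·)).finite_spectrum.image (fun w : ℂ => ‖w‖)).bddAbove.mono ?_
  rintro _ ⟨w, hw, rfl⟩
  exact ⟨w, hw, rfl⟩

theorem isUnit_one_sub_of_specRad_lt_one {n : ℕ} {A : Matrix (Fin n) (Fin n) ℝ}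
    (hρ : specRad A < 1) : IsUnit (1 - A) := by
  by_contra h
  have h1 : (1 : ℝ) ∈ spectrum ℝ A := by
    rwa [spectrum.mem_iff, map_one]
  have hle := norm_le_specRad (ofReal_mem_spectrum_map_ofReal h1)
  rw [Complex.ofReal_one, norm_one] at hle
  linarith

theorem vecMul_eq_self_of_eq_add_vecMulVec {R n : Type*} [CommRing R] [Fintype n] [DecidableEq n]
    {A C : Matrix n n R} {u v w : n → R}
    (hv : v ᵥ* (1 - C) = w) (hA : A = C + vecMulVec u w) (hvu : v ⬝ᵥ u = 1) : v ᵥ* A = v := by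
  have hvC : v ᵥ* C = v - w := by rw [← hv, vecMul_sub, vecMul_one, sub_sub_cancel]
  rw [hA, vecMul_add, vecMul_vecMulVec, hvC, hvu, one_smul, sub_add_cancel]

/-- Suppose `A = A* + A e₁ e₁ᵀ` with `ρ(A*) < 1`, let `E = (I − A*)⁻¹ A` and suppose
`e₁ᵀ E e₁ = 1`. Then `e₁ᵀ (I − A*)⁻¹` is a left `1`-eigenvector of `A`:
`e₁ᵀ (I − A*)⁻¹ A = e₁ᵀ (I − A*)⁻¹`. -/
theorem left_one_eigenvector_of_first_column_modification
    {d : ℕ} (A Astar : Matrix (Fin (d + 1)) (Fin (d + 1)) ℝ)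
    (hρ : specRad Astar < 1)
    (e₁ : Fin (d + 1) → ℝ) (he₁ : e₁ = Pi.single 0 1)
    (hA : A = Astar + Matrix.vecMulVec (A *ᵥ e₁) e₁)
    (E : Matrix (Fin (d + 1)) (Fin (d + 1)) ℝ)
    (hE : E = (1 - Astar)⁻¹ * A)
    (h11 : E 0 0 = 1) :
    Matrix.vecMul (Matrix.vecMul e₁ (1 - Astar)⁻¹) A = Matrix.vecMul e₁ (1 - Astar)⁻¹ := by
  have hdet := (isUnit_iff_isUnit_det _).mp (isUnit_one_sub_of_specRad_lt_one hρ)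
  refine vecMul_eq_self_of_eq_add_vecMulVec ?_ hA ?_
  · rw [vecMul_vecMul, nonsing_inv_mul _ hdet, vecMul_one]
  · rw [dotProduct_mulVec, vecMul_vecMul, ← hE, he₁, single_one_vecMul, dotProduct_single_one]
    exact h11
end

section
/- Let (X_j)_{j≥1} be i.i.d. nonnegative integer-valued random variables with E[X_1]=1 and finite exponential moments, and (Y_j)_{j≥1} i.i.d. nonnegative integer random variables (coupled so that (X_j,Y_j) are i.i.d. pairs) with E[Y_1]=c>0 and finite exponential moments. Then there exist constants A,B>0 such that for all ℓ,n≥1: P( (Σ_{j=1}^ℓ (X_j−1), Σ_{j=2}^ℓ Y_j) = (−1, n) ) ≤ A·exp(−B·|n + c − c·ℓ|/√ℓ). -/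
/-!
The event is contained in `{S = n}`, where `S = ∑_{1 ≤ j < ℓ} Y j` is a sum of `ℓ - 1` i.i.d.
copies of `Y`. Since `Y` has an exponential moment, the Taylor bound `eᵘ ≤ 1 + u + u² e^{|u|}`
gives `E[e^{sY}] ≤ exp(c s + K s²)` for `|s| ≤ t`, and the two-sided Chernoff bound at
`s = β / √ℓ`, with `β ≤ t` and `2Kβ ≤ 1`, makes the quadratic term at most `β / 2`:
`P(S = n) ≤ exp(β / 2 - β |n - c (ℓ - 1)| / √ℓ)`.
-/

open MeasureTheory ProbabilityTheory Real Finset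

lemma Real.exp_le_one_add_add_sq_mul_exp_abs (u : ℝ) : exp u ≤ 1 + u + u ^ 2 * exp |u| := by
  have hu2 : u ^ 2 ≤ u ^ 2 * exp |u| :=
    le_mul_of_one_le_right (sq_nonneg u) (one_le_exp (abs_nonneg u))
  rcases le_or_gt |u| 1 with hu | hu
  · linarith [(abs_le.mp (abs_exp_sub_one_sub_id_le hu)).2]
  · have h1 : |u| ≤ u ^ 2 := by nlinarith [sq_abs u, abs_nonneg u]
    rcases le_total u 0 with hneg | hpos
    · have : exp u ≤ 1 := exp_le_one_iff.mpr hneg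
      linarith [neg_abs_le u]
    · have : exp u ≤ u ^ 2 * exp |u| := by
        rw [abs_of_nonneg hpos] at hu ⊢
        exact le_mul_of_one_le_left (exp_nonneg u) (by nlinarith)
      linarith

lemma neg_mul_div_sqrt_add_mul_sq_le {K β D m ℓ : ℝ} (hK : 0 ≤ K) (hβ : 0 ≤ β)
    (hβK : 2 * K * β ≤ 1) (hmℓ : m ≤ ℓ) (hℓ : 0 < ℓ) :
    -(β / √ℓ * D) + m * K * (β / √ℓ) ^ 2 ≤ β / 2 + -β * D / √ℓ := by
  have hsq : (β / √ℓ) ^ 2 = β ^ 2 / ℓ := by rw [div_pow, sq_sqrt hℓ.le]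
  have h : m * K * (β ^ 2 / ℓ) ≤ β / 2 := by
    calc m * K * (β ^ 2 / ℓ) = m / ℓ * (K * β) * β := by ring
      _ ≤ 1 * (1 / 2) * β := by
          gcongr
          · exact div_le_one_of_le₀ hmℓ hℓ.le
          · linarith
      _ = β / 2 := by ring
  rw [hsq]
  linarith [show -(β / √ℓ * D) = -β * D / √ℓ by ring]

namespace ProbabilityTheory

variable {Ω : Type*} [MeasurableSpace Ω] {μ : Measure Ω}

lemma integrable_exp_log_mul_of_integrable_pow {z : ℝ} (hz : 1 < z) {M N : Ω → ℕ}
    (hN : Measurable N) (h_int : Integrable (fun ω ↦ z ^ (M ω + N ω)) μ) :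
    Integrable (fun ω ↦ exp (log z * N ω)) μ := by
  refine h_int.mono' (by fun_prop) (ae_of_all _ fun ω ↦ ?_)
  rw [norm_of_nonneg (exp_nonneg _), mul_comm, exp_nat_mul, exp_log (by linarith)]
  exact pow_le_pow_right₀ hz.le (Nat.le_add_left _ _)

lemma integrable_exp_neg_mul_natCast [IsFiniteMeasure μ] {t : ℝ} (ht : 0 ≤ t) {N : Ω → ℕ}
    (hN : Measurable N) :
    Integrable (fun ω ↦ exp (-t * N ω)) μ := by
  refine (integrable_const 1).mono' (by fun_prop) (ae_of_all _ fun ω ↦ ?_)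
  rw [norm_of_nonneg (exp_nonneg _), exp_le_one_iff, neg_mul, neg_nonpos]
  positivity

lemma exists_mgf_le_exp_mul_add_sq [IsProbabilityMeasure μ] {X : Ω → ℝ} {t : ℝ} (ht : 0 < t)
    (h_int_pos : Integrable (fun ω ↦ exp (t * X ω)) μ)
    (h_int_neg : Integrable (fun ω ↦ exp (-t * X ω)) μ) :
    ∃ K > 0, ∀ s, |s| ≤ t / 2 → mgf X μ s ≤ exp (μ[X] * s + K * s ^ 2) := by
  set R : Ω → ℝ := fun ω ↦ X ω ^ 2 * exp (t / 2 * |X ω|)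
  have hR : Integrable R μ := by
    have h := integrable_pow_abs_mul_exp_of_integrable_exp_mul (X := fun ω ↦ |X ω|)
      (v := t / 2) (t := t / 2) (by positivity)
      (by simpa using integrable_exp_mul_abs h_int_pos h_int_neg) (by simp) 2
    simpa [R] using h
  have hX : Integrable X μ := by
    simpa using integrable_pow_of_integrable_exp_mul ht.ne' h_int_pos h_int_neg 1
  have hR_nonneg : 0 ≤ μ[R] := integral_nonneg fun ω ↦ by positivity
  refine ⟨μ[R] + 1, by linarith, fun s hs ↦ ?_⟩
  have h_pointwise : ∀ ω, exp (s * X ω) ≤ 1 + s * X ω + s ^ 2 * R ω := fun ω ↦ by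
    have habs : |s * X ω| ≤ t / 2 * |X ω| := by
      rw [abs_mul]; exact mul_le_mul_of_nonneg_right hs (abs_nonneg _)
    calc exp (s * X ω) ≤ 1 + s * X ω + (s * X ω) ^ 2 * exp |s * X ω| :=
          exp_le_one_add_add_sq_mul_exp_abs _
      _ ≤ 1 + s * X ω + s ^ 2 * R ω := by
          rw [mul_pow, mul_assoc]
          gcongr
          exact mul_le_mul_of_nonneg_left (exp_le_exp.mpr habs) (sq_nonneg _)
  have h_lin : Integrable (fun ω ↦ 1 + s * X ω) μ := (integrable_const 1).add (hX.const_mul s)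
  calc mgf X μ s ≤ ∫ ω, (1 + s * X ω + s ^ 2 * R ω) ∂μ :=
        integral_mono (integrable_exp_mul_of_abs_le h_int_pos h_int_neg
          (by rw [abs_of_pos ht]; linarith)) (h_lin.add (hR.const_mul _)) h_pointwise
    _ = 1 + (μ[X] * s + μ[R] * s ^ 2) := by
        rw [integral_add h_lin (hR.const_mul _),
          integral_add (integrable_const 1) (hX.const_mul s), integral_const_mul,
          integral_const_mul]
        simp; ring
    _ ≤ exp (μ[X] * s + μ[R] * s ^ 2) := by
        linarith [add_one_le_exp (μ[X] * s + μ[R] * s ^ 2)]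
    _ ≤ exp (μ[X] * s + (μ[R] + 1) * s ^ 2) := by gcongr; linarith

lemma measureReal_ge_le_exp_of_mgf_le [IsFiniteMeasure μ] {S : Ω → ℝ} {a b s : ℝ} (x : ℝ)
    (hs : 0 ≤ s) (h_int : Integrable (fun ω ↦ exp (s * S ω)) μ)
    (h_mgf : mgf S μ s ≤ exp (a * s + b * s ^ 2)) :
    μ.real {ω | x ≤ S ω} ≤ exp (-(s * (x - a)) + b * s ^ 2) :=
  calc μ.real {ω | x ≤ S ω}
      ≤ exp (-s * x) * mgf S μ s := measure_ge_le_exp_mul_mgf x hs h_int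
    _ ≤ exp (-s * x) * exp (a * s + b * s ^ 2) := by gcongr
    _ = exp (-(s * (x - a)) + b * s ^ 2) := by rw [← exp_add]; ring_nf

lemma measureReal_le_le_exp_of_mgf_le [IsFiniteMeasure μ] {S : Ω → ℝ} {a b s : ℝ} (x : ℝ)
    (hs : 0 ≤ s) (h_int : Integrable (fun ω ↦ exp (-s * S ω)) μ)
    (h_mgf : mgf S μ (-s) ≤ exp (a * -s + b * s ^ 2)) :
    μ.real {ω | S ω ≤ x} ≤ exp (-(s * (a - x)) + b * s ^ 2) := by
  have h := measureReal_ge_le_exp_of_mgf_le (S := -S) (a := -a) (b := b) (-x) hs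
    (by simpa [mul_neg, ← neg_mul] using h_int) (by rw [mgf_neg]; convert h_mgf using 2; ring)
  simp only [Pi.neg_apply, neg_le_neg_iff] at h
  convert h using 3; ring

lemma measureReal_eq_le_exp_of_mgf_le [IsFiniteMeasure μ] {S : Ω → ℝ} {a b s : ℝ} (x : ℝ)
    (hs : 0 ≤ s) (h_int : ∀ u, |u| ≤ s → Integrable (fun ω ↦ exp (u * S ω)) μ)
    (h_mgf : ∀ u, |u| ≤ s → mgf S μ u ≤ exp (a * u + b * u ^ 2)) :
    μ.real {ω | S ω = x} ≤ exp (-(s * |x - a|) + b * s ^ 2) := by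
  have hs_abs : |s| ≤ s := (abs_of_nonneg hs).le
  have hs_neg : |-s| ≤ s := by rwa [abs_neg]
  rcases le_total a x with hax | hxa
  · rw [abs_of_nonneg (sub_nonneg.mpr hax)]
    exact (measureReal_mono fun ω hω ↦ le_of_eq hω.symm).trans
      (measureReal_ge_le_exp_of_mgf_le x hs (h_int s hs_abs) (h_mgf s hs_abs))
  · rw [abs_of_nonpos (sub_nonpos.mpr hxa), neg_sub]
    exact (measureReal_mono fun ω hω ↦ le_of_eq hω).trans
      (measureReal_le_le_exp_of_mgf_le x hs (h_int (-s) hs_neg)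
        (by simpa using h_mgf (-s) hs_neg))

variable {ι : Type*} {V : ι → Ω → ℝ} {i₀ : ι}

lemma iIndepFun.mgf_sum_le_of_identDistrib (h_indep : iIndepFun V μ)
    (h_meas : ∀ i, Measurable (V i)) (h_ident : ∀ i, IdentDistrib (V i) (V i₀) μ μ)
    (s : Finset ι) {a b u : ℝ} (h_mgf : mgf (V i₀) μ u ≤ exp (a * u + b * u ^ 2)) :
    mgf (∑ i ∈ s, V i) μ u ≤ exp (#s * a * u + #s * b * u ^ 2) := by
  rw [h_indep.mgf_sum h_meas,
    prod_congr rfl fun i _ ↦ congrFun (mgf_congr_identDistrib (h_ident i)) u, prod_const]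
  calc mgf (V i₀) μ u ^ #s ≤ exp (a * u + b * u ^ 2) ^ #s := by gcongr; exact mgf_nonneg
    _ = exp (#s * a * u + #s * b * u ^ 2) := by rw [← exp_nat_mul]; ring_nf

lemma iIndepFun.integrable_exp_mul_sum_of_identDistrib [IsFiniteMeasure μ]
    (h_indep : iIndepFun V μ)
    (h_meas : ∀ i, Measurable (V i)) (h_ident : ∀ i, IdentDistrib (V i) (V i₀) μ μ)
    (s : Finset ι) {u : ℝ} (h_int : Integrable (fun ω ↦ exp (u * V i₀ ω)) μ) :
    Integrable (fun ω ↦ exp (u * (∑ i ∈ s, V i) ω)) μ :=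
  h_indep.integrable_exp_mul_sum h_meas fun i _ ↦
    ((h_ident i).comp (measurable_const_mul u).exp).integrable_iff.mpr h_int

theorem iIndepFun.exists_measureReal_sum_eq_le [IsProbabilityMeasure μ]
    (h_indep : iIndepFun V μ) (h_meas : ∀ i, Measurable (V i))
    (h_ident : ∀ i, IdentDistrib (V i) (V i₀) μ μ) {t : ℝ} (ht : 0 < t)
    (h_int_pos : Integrable (fun ω ↦ exp (t * V i₀ ω)) μ)
    (h_int_neg : Integrable (fun ω ↦ exp (-t * V i₀ ω)) μ) :
    ∃ A > 0, ∃ B > 0, ∀ (s : Finset ι) (ℓ : ℝ), #s ≤ ℓ → 1 ≤ ℓ → ∀ x : ℝ,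
      μ.real {ω | ∑ i ∈ s, V i ω = x} ≤ A * exp (-B * |x - #s * μ[V i₀]| / √ℓ) := by
  obtain ⟨K, hK, h_mgf⟩ := exists_mgf_le_exp_mul_add_sq ht h_int_pos h_int_neg
  set β := min (t / 2) (1 / (2 * K))
  have hβ : 0 < β := lt_min (by linarith) (by positivity)
  have hβK : 2 * K * β ≤ 1 := by
    have := min_le_right (t / 2) (1 / (2 * K)); field_simp at this ⊢; linarith
  refine ⟨exp (β / 2), exp_pos _, β, hβ, fun s ℓ hsℓ hℓ x ↦ ?_⟩
  have hβℓ : 0 ≤ β / √ℓ := by positivity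
  have hβℓ_le : β / √ℓ ≤ t / 2 :=
    (div_le_self hβ.le (one_le_sqrt.mpr hℓ)).trans (min_le_left _ _)
  have h := measureReal_eq_le_exp_of_mgf_le (S := ∑ i ∈ s, V i)
    (a := #s * μ[V i₀]) (b := #s * K) x hβℓ
    (fun u hu ↦ h_indep.integrable_exp_mul_sum_of_identDistrib h_meas h_ident _
      (integrable_exp_mul_of_abs_le h_int_pos h_int_neg (by rw [abs_of_pos ht]; linarith)))
    (fun u hu ↦
      h_indep.mgf_sum_le_of_identDistrib h_meas h_ident _ (h_mgf u (hu.trans hβℓ_le)))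
  simp only [Finset.sum_apply] at h
  rw [← exp_add]
  exact h.trans (exp_le_exp.mpr
    (neg_mul_div_sqrt_add_mul_sq_le hK.le hβ.le hβK hsℓ (by linarith)))

end ProbabilityTheory

theorem pair_local_deviation_bound_general
    {Ω : Type*} [MeasurableSpace Ω] (μ : Measure Ω) [IsProbabilityMeasure μ]
    (X Y : ℕ → Ω → ℕ) (hXmeas : ∀ j, Measurable (X j)) (hYmeas : ∀ j, Measurable (Y j))
    (hindep : iIndepFun (fun j ω => (X j ω, Y j ω)) μ)
    (hident : ∀ j, μ.map (fun ω => (X j ω, Y j ω)) = μ.map (fun ω => (X 0 ω, Y 0 ω)))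
    (c : ℝ) (hmeanY : ∫ ω, (Y 0 ω : ℝ) ∂μ = c)
    (hexp : ∃ z : ℝ, 1 < z ∧ Integrable (fun ω => z ^ (X 0 ω + Y 0 ω)) μ) :
    ∃ A > (0:ℝ), ∃ B > (0:ℝ), ∀ ℓ n : ℕ, 1 ≤ ℓ → 1 ≤ n →
      μ {ω | (∑ j ∈ Finset.range ℓ, ((X j ω : ℤ) - 1)) = -1 ∧
             (∑ j ∈ Finset.Ico 1 ℓ, (Y j ω : ℤ)) = (n : ℤ)} ≤
        ENNReal.ofReal
          (A * Real.exp (-B * |(n : ℝ) + c - c * ℓ| / Real.sqrt ℓ)) := by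
  obtain ⟨z, hz, hint⟩ := hexp
  set V : ℕ → Ω → ℝ := fun j ω ↦ Y j ω
  have hVmeas : ∀ j, Measurable (V j) := fun j ↦ measurable_from_nat.comp (hYmeas j)
  have hVindep : iIndepFun V μ :=
    hindep.comp (fun _ p ↦ (p.2 : ℝ)) fun _ ↦ measurable_from_nat.comp measurable_snd
  have hVident : ∀ j, IdentDistrib (V j) (V 0) μ μ := fun j ↦
    (IdentDistrib.mk ((hXmeas j).prodMk (hYmeas j)).aemeasurable
      ((hXmeas 0).prodMk (hYmeas 0)).aemeasurable (hident j)).comp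
      (measurable_from_nat.comp measurable_snd)
  obtain ⟨A, hA, B, hB, hbound⟩ := hVindep.exists_measureReal_sum_eq_le hVmeas hVident
    (log_pos hz) (integrable_exp_log_mul_of_integrable_pow hz (hYmeas 0) hint)
    (integrable_exp_neg_mul_natCast (log_pos hz).le (hYmeas 0))
  refine ⟨A, hA, B, hB, fun ℓ n hℓ _ ↦ ?_⟩
  have hcard : ((#(Ico 1 ℓ) : ℕ) : ℝ) = ℓ - 1 := by
    rw [Nat.card_Ico, Nat.cast_sub hℓ, Nat.cast_one]
  have h := hbound (Ico 1 ℓ) ℓ (by rw [hcard]; linarith) (by exact_mod_cast hℓ) n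
  rw [hcard, hmeanY, show (n : ℝ) - (ℓ - 1) * c = n + c - c * ℓ by ring] at h
  calc μ {ω | (∑ j ∈ Finset.range ℓ, ((X j ω : ℤ) - 1)) = -1 ∧
             (∑ j ∈ Finset.Ico 1 ℓ, (Y j ω : ℤ)) = (n : ℤ)}
      ≤ μ {ω | ∑ j ∈ Ico 1 ℓ, V j ω = n} := measure_mono fun ω hω ↦ by
        simpa [V] using congrArg (Int.cast : ℤ → ℝ) hω.2
    _ = ENNReal.ofReal (μ.real {ω | ∑ j ∈ Ico 1 ℓ, V j ω = n}) := (ofReal_measureReal).symm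
    _ ≤ _ := ENNReal.ofReal_le_ofReal h

/-- Let `(X_j, Y_j)` be i.i.d. pairs of nonnegative-integer random variables with
`E[X_1] = 1`, `E[Y_1] = c > 0` and finite exponential moments. Then there are
constants `A, B > 0` such that uniformly in `ℓ, n ≥ 1`,
`P((Σ_{j=1}^ℓ (X_j − 1), Σ_{j=2}^ℓ Y_j) = (−1, n)) ≤ A exp(−B |n + c − cℓ| / √ℓ)`. -/
theorem pair_local_deviation_bound
    {Ω : Type*} [MeasurableSpace Ω] (μ : Measure Ω) [IsProbabilityMeasure μ]
    (X Y : ℕ → Ω → ℕ) (hXmeas : ∀ j, Measurable (X j)) (hYmeas : ∀ j, Measurable (Y j))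
    (hindep : iIndepFun (fun j ω => (X j ω, Y j ω)) μ)
    (hident : ∀ j, μ.map (fun ω => (X j ω, Y j ω)) = μ.map (fun ω => (X 0 ω, Y 0 ω)))
    (hmeanX : ∫ ω, (X 0 ω : ℝ) ∂μ = 1)
    (c : ℝ) (hc : 0 < c) (hmeanY : ∫ ω, (Y 0 ω : ℝ) ∂μ = c)
    (hexp : ∃ z : ℝ, 1 < z ∧ Integrable (fun ω => z ^ (X 0 ω + Y 0 ω)) μ) :
    ∃ A > (0:ℝ), ∃ B > (0:ℝ), ∀ ℓ n : ℕ, 1 ≤ ℓ → 1 ≤ n →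
      μ {ω | (∑ j ∈ Finset.range ℓ, ((X j ω : ℤ) - 1)) = -1 ∧
             (∑ j ∈ Finset.Ico 1 ℓ, (Y j ω : ℤ)) = (n : ℤ)} ≤
        ENNReal.ofReal
          (A * Real.exp (-B * |(n : ℝ) + c - c * ℓ| / Real.sqrt ℓ)) :=
  pair_local_deviation_bound_general μ X Y hXmeas hYmeas hindep hident c hmeanY hexp
end
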